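/- arXiv:0905.1361 — 4 statements merged into one kernel-verified Lean document; each statement's English description precedes it below -/
import Mathlib

section
/- Let {X(t)} be a uniformly layered walk and fix k≥0; let P_k denote its law started from the uniform distribution on L_k. For all t≥0, all sequences of nonnegative integers k=ℓ(0),…,ℓ(t) satisfying ℓ(s+1)≤ℓ(s)+1 for s=0,…,t−1, and all z∈L_{ℓ(t)}: P_k( X(t)=z | ‖X(s)‖=ℓ(s) for all 0≤s≤t ) = 1/#L_{ℓ(t)} = P_k( X(t)=z | ‖X(t)‖=ℓ(t) ), whenever the conditioning events have positive probability. -/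
open MeasureTheory Filter
open scoped Classical ENNReal

abbrev Z2 : Type := ℤ × ℤ

def origin : Z2 := (0, 0)

def dnorm (x : Z2) : ℕ := x.1.natAbs + x.2.natAbs

def layer (k : ℕ) : Set Z2 := {x | dnorm x = k}

def layerCard (k : ℕ) : ℕ := if k = 0 then 1 else 4 * k

def diamond (r : ℝ) : Set Z2 := {x | (dnorm x : ℝ) ≤ r}

noncomputable def diamondF (n : ℕ) : Finset Z2 :=
  (Finset.Icc (-(n : ℤ), -(n : ℤ)) ((n : ℤ), (n : ℤ))).filter fun x => dnorm x ≤ n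

def vol (n : ℕ) : ℕ := 2 * n * (n + 1) + 1

/-- A uniformly layered walk kernel: a Markov transition kernel on `ℤ²`
satisfying conditions (U1), (U2), (U3). -/
structure IsULW (Q : Z2 → Z2 → ℝ) : Prop where
  nonneg : ∀ x y, 0 ≤ Q x y
  rowSum : ∀ x, ∑' y, Q x y = 1
  u1 : ∀ x y, dnorm x + 1 < dnorm y → Q x y = 0
  u2 : ∀ x, ∃ y, dnorm y = dnorm x + 1 ∧ 0 < Q x y
  u3 : ∀ (k : ℕ) (y z : Z2), dnorm y = dnorm z →
    ∑' x : layer k, Q x.1 y = ∑' x : layer k, Q x.1 z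

/-- `X` is a Markov chain with transition kernel `Q` started at `x0`:
all finite-dimensional distributions are specified. -/
def IsWalkFrom {Ω : Type} [MeasurableSpace Ω] (P : Measure Ω)
    (X : ℕ → Ω → Z2) (Q : Z2 → Z2 → ℝ) (x0 : Z2) : Prop :=
  ∀ (t : ℕ) (path : ℕ → Z2),
    P {ω | ∀ s ≤ t, X s ω = path s} =
      ENNReal.ofReal ((if path 0 = x0 then (1 : ℝ) else 0) *
        ∏ s ∈ Finset.range t, Q (path s) (path (s + 1)))

/-- `X` is a Markov chain with transition kernel `Q` started from the uniform
distribution on layer `L_k`. -/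
def IsWalkUniform {Ω : Type} [MeasurableSpace Ω] (P : Measure Ω)
    (X : ℕ → Ω → Z2) (Q : Z2 → Z2 → ℝ) (k : ℕ) : Prop :=
  ∀ (t : ℕ) (path : ℕ → Z2),
    P {ω | ∀ s ≤ t, X s ω = path s} =
      ENNReal.ofReal ((if dnorm (path 0) = k then (1 : ℝ) / layerCard k else 0) *
        ∏ s ∈ Finset.range t, Q (path s) (path (s + 1)))

/-- The walks `Y 0, Y 1, …` are independent. -/
def IndepWalks {Ω : Type} [MeasurableSpace Ω] (P : Measure Ω)
    (Y : ℕ → ℕ → Ω → Z2) : Prop :=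
  ∀ (I : Finset ℕ) (t : ℕ) (path : ℕ → ℕ → Z2),
    P {ω | ∀ i ∈ I, ∀ s ≤ t, Y i s ω = path i s} =
      ∏ i ∈ I, P {ω | ∀ s ≤ t, Y i s ω = path i s}

/-- Internal DLA clusters built from the walks `Y`:
`gCluster Y k = A(k+1)`, the cluster of `k+1` occupied sites; the walk `Y i`
is the walk performed by the particle producing `A(i+1)` from `A(i)`,
and `Y 0 0` is the position of the very first particle. -/
noncomputable def gCluster {Ω : Type} (Y : ℕ → ℕ → Ω → Z2) : ℕ → Ω → Finset Z2
  | 0 => fun ω => {Y 0 0 ω}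
  | k + 1 => fun ω =>
      insert (Y (k + 1) (sInf {t | Y (k + 1) t ω ∉ gCluster Y k ω}) ω)
        (gCluster Y k ω)

/-- The stopped process at level `n`: `stoppedC Y n k = S(k+1)`; particles also
stop upon reaching layer `L_n`. -/
noncomputable def stoppedC {Ω : Type} (Y : ℕ → ℕ → Ω → Z2) (n : ℕ) : ℕ → Ω → Finset Z2
  | 0 => fun _ => {origin}
  | k + 1 => fun ω =>
      insert (Y (k + 1)
          (sInf {t | Y (k + 1) t ω ∈ layer n ∨ Y (k + 1) t ω ∉ stoppedC Y n k ω}) ω)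
        (stoppedC Y n k ω)

/-- The extended process at level `n`: `extC Y n i = E(i)`, starting from the full
diamond `D_n` and driven by the walks `Y (vol n + i)`. -/
noncomputable def extC {Ω : Type} (Y : ℕ → ℕ → Ω → Z2) (n : ℕ) : ℕ → Ω → Finset Z2
  | 0 => fun _ => diamondF n
  | k + 1 => fun ω =>
      insert (Y (vol n + k) (sInf {t | Y (vol n + k) t ω ∉ extC Y n k ω}) ω)
        (extC Y n k ω)

/-- The outward directed kernel `Q_out`. -/
noncomputable def Qout (x y : Z2) : ℝ :=
  if x = origin then (if dnorm y = 1 then 1 / 4 else 0)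
  else if x.1 ≠ 0 ∧ x.2 ≠ 0 then
    if y = (x.1, x.2 + x.2.sign) then
      ((x.2.natAbs : ℝ) + 1 / 2) / ((x.1.natAbs : ℝ) + (x.2.natAbs : ℝ) + 1)
    else if y = (x.1 + x.1.sign, x.2) then
      ((x.1.natAbs : ℝ) + 1 / 2) / ((x.1.natAbs : ℝ) + (x.2.natAbs : ℝ) + 1)
    else 0
  else if x.2 = 0 then
    if y = (x.1, 1) ∨ y = (x.1, -1) then (1 / 2) / ((x.1.natAbs : ℝ) + 1)
    else if y = (x.1 + x.1.sign, 0) then (x.1.natAbs : ℝ) / ((x.1.natAbs : ℝ) + 1)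
    else 0
  else
    if y = (1, x.2) ∨ y = (-1, x.2) then (1 / 2) / ((x.2.natAbs : ℝ) + 1)
    else if y = (0, x.2 + x.2.sign) then (x.2.natAbs : ℝ) / ((x.2.natAbs : ℝ) + 1)
    else 0

/-- The inward directed kernel `Q_in`. -/
noncomputable def Qin (x y : Z2) : ℝ :=
  if x = origin then (if y = origin then 1 else 0)
  else if x.1 ≠ 0 ∧ x.2 ≠ 0 then
    if y = (x.1, x.2 - x.2.sign) then
      ((x.2.natAbs : ℝ) - 1 / 2) / ((x.1.natAbs : ℝ) + (x.2.natAbs : ℝ) - 1)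
    else if y = (x.1 - x.1.sign, x.2) then
      ((x.1.natAbs : ℝ) - 1 / 2) / ((x.1.natAbs : ℝ) + (x.2.natAbs : ℝ) - 1)
    else 0
  else if x.2 = 0 then
    if y = (x.1 - x.1.sign, 0) then 1 else 0
  else
    if y = (0, x.2 - x.2.sign) then 1 else 0

/-- The interpolating kernel `Q_p = p Q_in + (1-p) Q_out`. -/
noncomputable def Qp (p : ℝ) (x y : Z2) : ℝ := p * Qin x y + (1 - p) * Qout x y

/-- First hitting time of the set `A`, valued in `ℕ∞` (`⊤` when `A` is never visited). -/
noncomputable def hitTimeE {Ω : Type} (X : ℕ → Ω → Z2) (A : Set Z2) (ω : Ω) : ℕ∞ :=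
  sInf ((fun t : ℕ => (t : ℕ∞)) '' {t | X t ω ∈ A})

/-!
Split `Ω` according to the first `t + 1` positions of the walk. The cylinder probabilities are
the path weights `μ₀(x₀) Q(x₀,x₁) ⋯ Q(x_{t-1},x_t)`, which sum to `1`; hence every event
determined by these positions is null-measurable (nothing is assumed measurable) and has as
probability the total weight of its paths. The weight of the paths that follow prescribed layers
and end at `z` obeys a forward recursion in which (U3) and the uniform start on `L_k` make it
depend on `z` only through `‖z‖`. Conditioning on the layers therefore leaves `X t` uniform on
its layer.
-/

section Measure

variable {Ω ι : Type*} [MeasurableSpace Ω] {P : Measure Ω}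

lemma nullMeasurableSet_of_measure_add_measure_compl_le [IsFiniteMeasure P] {A : Set Ω}
    (h : P A + P Aᶜ ≤ P Set.univ) : NullMeasurableSet A P := by
  set T := toMeasurable P A
  have hT : MeasurableSet T := measurableSet_toMeasurable P A
  have hAT : A ⊆ T := subset_toMeasurable P A
  have hsplit : P (Aᶜ ∩ T) + P Tᶜ = P Aᶜ := by
    rw [← measure_inter_add_sdiff Aᶜ hT, Set.sdiff_eq, Set.compl_subset_compl.mpr hAT |>
      Set.inter_eq_right.mpr]
  have hTc : P A + P Tᶜ = P Set.univ := by
    rw [← measure_toMeasurable A, measure_add_measure_compl hT]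
  have hnull : P (T \ A) = 0 := by
    have : P (Aᶜ ∩ T) + P Tᶜ ≤ 0 + P Tᶜ := by
      rw [hsplit, zero_add]
      exact (ENNReal.add_le_add_iff_left (measure_ne_top P A)).mp (h.trans hTc.ge)
    rw [Set.sdiff_eq, Set.inter_comm]
    exact nonpos_iff_eq_zero.mp ((ENNReal.add_le_add_iff_right (measure_ne_top P _)).mp this)
  refine hT.nullMeasurableSet.congr (ae_eq_set.mpr ⟨hnull, ?_⟩)
  rw [Set.sdiff_eq_empty.mpr hAT, measure_empty]

variable [Countable ι] {π : Ω → ι}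

lemma measure_preimage_le_tsum (J : Set ι) :
    P (π ⁻¹' J) ≤ ∑' i : J, P (π ⁻¹' {(i : ι)}) := by
  rw [← Set.biUnion_preimage_singleton]
  exact measure_biUnion_le P J.to_countable _

variable [IsFiniteMeasure P]

lemma nullMeasurableSet_preimage_of_tsum_le (h : ∑' i, P (π ⁻¹' {i}) ≤ P Set.univ)
    (J : Set ι) : NullMeasurableSet (π ⁻¹' J) P := by
  refine nullMeasurableSet_of_measure_add_measure_compl_le ?_
  calc P (π ⁻¹' J) + P (π ⁻¹' J)ᶜ
      ≤ ∑' i : J, P (π ⁻¹' {(i : ι)}) + ∑' i : ↥Jᶜ, P (π ⁻¹' {(i : ι)}) := by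
        rw [← Set.preimage_compl]
        exact add_le_add (measure_preimage_le_tsum J) (measure_preimage_le_tsum Jᶜ)
    _ = ∑' i, P (π ⁻¹' {i}) :=
        ENNReal.summable.tsum_add_tsum_compl (f := fun i => P (π ⁻¹' {i})) ENNReal.summable
    _ ≤ P Set.univ := h

lemma measure_preimage_eq_tsum_of_tsum_le (h : ∑' i, P (π ⁻¹' {i}) ≤ P Set.univ)
    (J : Set ι) : P (π ⁻¹' J) = ∑' i : J, P (π ⁻¹' {(i : ι)}) := by
  rw [← Set.biUnion_preimage_singleton]
  refine measure_biUnion₀ J.to_countable ?_ fun i _ => nullMeasurableSet_preimage_of_tsum_le h {i}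
  intro i _ j _ hij
  exact Disjoint.aedisjoint (Set.disjoint_singleton.mpr hij |>.preimage π)

end Measure

section PathMass

variable {α : Type*} (μ : α → ℝ≥0∞) (q : α → α → ℝ≥0∞)

noncomputable def pathWeight {t : ℕ} (f : Fin (t + 1) → α) : ℝ≥0∞ :=
  μ (f 0) * ∏ i : Fin t, q (f i.castSucc) (f i.succ)

noncomputable def pathMass (C : ℕ → Set α) (t : ℕ) (z : α) : ℝ≥0∞ :=
  ∑' f : Fin (t + 1) → α,
    {f | (∀ i : Fin (t + 1), f i ∈ C i) ∧ f (Fin.last t) = z}.indicator (pathWeight μ q) f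

variable {μ q}

lemma pathWeight_snoc {t : ℕ} (f : Fin (t + 1) → α) (y : α) :
    pathWeight μ q (Fin.snoc f y : Fin (t + 2) → α) =
      pathWeight μ q f * q (f (Fin.last t)) y := by
  simp [pathWeight, Fin.prod_univ_castSucc, mul_assoc, Fin.succ_castSucc, -Fin.castSucc_succ]

lemma pathMass_zero (C : ℕ → Set α) (z : α) :
    pathMass μ q C 0 z = if z ∈ C 0 then μ z else 0 := by
  rw [pathMass, tsum_eq_single (fun _ => z)]
  · simp [Set.indicator_apply, pathWeight]
  · intro f hf
    refine Set.indicator_of_notMem ?_ _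
    rintro ⟨-, hz⟩
    exact hf (funext fun i => by rw [Fin.fin_one_eq_zero i, ← hz]; rfl)

lemma tsum_fin_snoc {t : ℕ} (g : (Fin (t + 2) → α) → ℝ≥0∞) :
    ∑' f, g f = ∑' f : Fin (t + 1) → α, ∑' y, g (Fin.snoc f y) := by
  rw [← (Fin.snocEquiv fun _ => α).tsum_eq, ENNReal.tsum_prod', ENNReal.tsum_comm]
  rfl

lemma pathMass_succ (C : ℕ → Set α) (t : ℕ) (z : α) :
    pathMass μ q C (t + 1) z =
      if z ∈ C (t + 1) then ∑' y, pathMass μ q C t y * q y z else 0 := by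
  rw [pathMass, tsum_fin_snoc, ENNReal.tsum_comm, tsum_eq_single z]
  · split_ifs with hz
    · simp_rw [pathMass, ← ENNReal.tsum_mul_right, Set.indicator_apply, ite_mul, zero_mul]
      rw [ENNReal.tsum_comm]
      refine tsum_congr fun f => ?_
      rw [tsum_eq_single (f (Fin.last t)) fun y hy => if_neg fun h => hy h.2.symm]
      simp [Fin.forall_fin_succ', hz, pathWeight_snoc]
    · simp [Fin.forall_fin_succ', hz]
  · intro y hy
    simp [hy]

lemma tsum_pathWeight (hμ : ∑' x, μ x = 1) (hq : ∀ x, ∑' y, q x y = 1) (t : ℕ) :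
    ∑' f : Fin (t + 1) → α, pathWeight μ q f = 1 := by
  induction t with
  | zero =>
    rw [← hμ, ← (Equiv.funUnique (Fin 1) α).tsum_eq μ]
    simp [pathWeight]
  | succ t ih =>
    simp_rw [tsum_fin_snoc, pathWeight_snoc, ENNReal.tsum_mul_left, hq, mul_one, ih]

lemma tsum_pathMass (C : ℕ → Set α) (t : ℕ) :
    ∑' z, pathMass μ q C t z =
      ∑' f : Fin (t + 1) → α,
        {f | ∀ i : Fin (t + 1), f i ∈ C i}.indicator (pathWeight μ q) f := by
  simp only [pathMass]
  rw [ENNReal.tsum_comm]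
  refine tsum_congr fun f => ?_
  rw [tsum_eq_single (f (Fin.last t)) fun z hz =>
    Set.indicator_of_notMem (fun h => hz h.2.symm) _]
  simp [Set.indicator_apply]

lemma pathMass_eq_zero_of_notMem {C : ℕ → Set α} {t : ℕ} {z : α} (hz : z ∉ C t) :
    pathMass μ q C t z = 0 := by
  refine ENNReal.tsum_eq_zero.mpr fun f => Set.indicator_of_notMem ?_ _
  rintro ⟨hC, rfl⟩
  exact hz (hC (Fin.last t))

lemma tsum_comp_mul_eq_tsum_fiber {β : Type*} (ρ : α → β) (g : β → ℝ≥0∞)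
    (r : α → ℝ≥0∞) :
    ∑' y, g (ρ y) * r y = ∑' b, g b * ∑' y : {y // ρ y = b}, r y := by
  rw [← (Equiv.sigmaFiberEquiv ρ).tsum_eq, ENNReal.tsum_sigma']
  refine tsum_congr fun b => ?_
  rw [← ENNReal.tsum_mul_left]
  exact tsum_congr fun y => by rw [Equiv.sigmaFiberEquiv_apply, y.2]

-- `hq` is condition (U3) for the fibers of `ρ`.
lemma pathMass_factorsThrough {β : Type*} (ρ : α → β) (D : ℕ → Set β)
    (hμ : μ.FactorsThrough ρ)
    (hq : ∀ b, (fun z => ∑' y : {y // ρ y = b}, q y z).FactorsThrough ρ) (t : ℕ) :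
    (pathMass μ q (fun s => ρ ⁻¹' D s) t).FactorsThrough ρ := by
  induction t with
  | zero =>
    intro z z' h
    simp only [pathMass_zero, Set.mem_preimage, h, hμ h]
  | succ t ih =>
    intro z z' h
    simp only [pathMass_succ, Set.mem_preimage, h]
    have hfiber (w : α) : ∑' y, pathMass μ q (fun s => ρ ⁻¹' D s) t y * q y w =
        ∑' b, Function.extend ρ (pathMass μ q (fun s => ρ ⁻¹' D s) t) 0 b *
          ∑' y : {y // ρ y = b}, q y w := by
      rw [← tsum_comp_mul_eq_tsum_fiber ρ _ (q · w)]
      simp_rw [ih.extend_apply]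
    rw [hfiber, hfiber]
    congr 1
    exact tsum_congr fun b => congrArg (HMul.hMul _) (hq b h)

end PathMass

noncomputable def layerFinset (m : ℕ) : Finset Z2 :=
  (Finset.Icc (-(m : ℤ), -(m : ℤ)) ((m : ℤ), (m : ℤ))).filter fun x => dnorm x = m

lemma mem_layerFinset {m : ℕ} {x : Z2} : x ∈ layerFinset m ↔ dnorm x = m := by
  rw [layerFinset, Finset.mem_filter]
  simp only [Finset.mem_Icc, Prod.le_def, dnorm]
  omega

lemma coe_layerFinset (m : ℕ) : (layerFinset m : Set Z2) = layer m :=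
  Set.ext fun _ => mem_layerFinset

-- `θ` parametrizes `L_m` by `(0, 4m]`, running counterclockwise from `(m, 0)`.
lemma card_layerFinset (m : ℕ) : (layerFinset m).card = layerCard m := by
  rcases m.eq_zero_or_pos with rfl | hm
  · refine Finset.card_eq_one.mpr ⟨(0, 0), Finset.ext fun x => ?_⟩
    simp only [mem_layerFinset, dnorm, Finset.mem_singleton, Prod.ext_iff]
    omega
  calc (layerFinset m).card = (Finset.Ioc (0 : ℤ) (4 * m)).card := by
        refine Finset.card_nbij' (fun x => if 0 < x.2 then m - x.1 else 3 * m + x.1)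
          (fun θ => if θ < 2 * m then (m - θ, m - ((m : ℤ) - θ).natAbs)
            else (θ - 3 * m, ((θ - 3 * m).natAbs : ℤ) - m)) ?_ ?_ ?_ ?_ <;>
        · intro x hx
          simp only [Finset.coe_Ioc, Set.mem_Ioc, Finset.mem_coe, mem_layerFinset, dnorm,
            Prod.ext_iff] at hx ⊢
          split_ifs <;> omega
    _ = layerCard m := by simp [layerCard, hm.ne']; omega

noncomputable def layerUniform (k : ℕ) (x : Z2) : ℝ≥0∞ :=
  if dnorm x = k then (layerCard k : ℝ≥0∞)⁻¹ else 0

noncomputable def kernelENNReal (Q : Z2 → Z2 → ℝ) (x y : Z2) : ℝ≥0∞ :=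
  ENNReal.ofReal (Q x y)

lemma layerCard_pos (k : ℕ) : 0 < layerCard k := by
  rw [layerCard]
  split_ifs <;> omega

lemma layerUniform_factorsThrough (k : ℕ) : (layerUniform k).FactorsThrough dnorm :=
  fun x y h => by simp only [layerUniform, h]

lemma tsum_layerUniform (k : ℕ) : ∑' x, layerUniform k x = 1 := by
  have hconst : ∀ x ∈ layerFinset k, layerUniform k x = (layerCard k : ℝ≥0∞)⁻¹ :=
    fun x hx => if_pos (mem_layerFinset.mp hx)
  rw [tsum_eq_sum (s := layerFinset k) (f := layerUniform k)
      fun x hx => if_neg (mt mem_layerFinset.mpr hx),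
    Finset.sum_congr rfl hconst, Finset.sum_const, card_layerFinset, nsmul_eq_mul,
    ENNReal.mul_inv_cancel (mod_cast (layerCard_pos k).ne') (ENNReal.natCast_ne_top _)]

namespace IsULW

variable {Q : Z2 → Z2 → ℝ}

lemma tsum_kernelENNReal (hQ : IsULW Q) (x : Z2) : ∑' y, kernelENNReal Q x y = 1 := by
  have hsum : Summable (Q x) := by
    by_contra hs
    simpa [tsum_eq_zero_of_not_summable hs] using hQ.rowSum x
  simp only [kernelENNReal]
  rw [← ENNReal.ofReal_tsum_of_nonneg (hQ.nonneg x) hsum, hQ.rowSum x,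
    ENNReal.ofReal_one]

lemma columnSum_factorsThrough (hQ : IsULW Q) (j : ℕ) :
    (fun y => ∑' x : {x // dnorm x = j}, kernelENNReal Q x y).FactorsThrough dnorm := by
  have : Finite {x // dnorm x = j} :=
    Set.finite_coe_iff.mpr (coe_layerFinset j ▸ (layerFinset j).finite_toSet : (layer j).Finite)
  intro y z h
  simp only [kernelENNReal]
  rw [← ENNReal.ofReal_tsum_of_nonneg (fun x => hQ.nonneg _ y) Summable.of_finite,
    ← ENNReal.ofReal_tsum_of_nonneg (fun x => hQ.nonneg _ z) Summable.of_finite]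
  exact congrArg ENNReal.ofReal (hQ.u3 j y z h)

end IsULW

section Walk

variable {Ω : Type} [MeasurableSpace Ω] {P : Measure Ω} {Q : Z2 → Z2 → ℝ} {k : ℕ}
  {X : ℕ → Ω → Z2}

def trajectory (X : ℕ → Ω → Z2) (t : ℕ) (ω : Ω) : Fin (t + 1) → Z2 := fun i => X i ω

lemma IsWalkUniform.measure_cylinder (hwalk : IsWalkUniform P X Q k) (hQ : IsULW Q) {t : ℕ}
    (f : Fin (t + 1) → Z2) :
    P (trajectory X t ⁻¹' {f}) = pathWeight (layerUniform k) (kernelENNReal Q) f := by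
  have hclamp (s : ℕ) (hs : s ≤ t) : Fin.clamp s t = ⟨s, by omega⟩ := Fin.ext (by simp [hs])
  have hcyl : trajectory X t ⁻¹' {f} = {ω | ∀ s ≤ t, X s ω = f (Fin.clamp s t)} := by
    ext ω
    simp only [trajectory, Set.mem_preimage, Set.mem_singleton_iff, funext_iff, Fin.forall_iff,
      Nat.lt_succ_iff, Set.mem_ofPred_eq]
    exact forall₂_congr fun s hs => by rw [hclamp s hs]
  rw [hcyl, hwalk, pathWeight, ENNReal.ofReal_mul (by split_ifs <;> positivity),
    ENNReal.ofReal_prod_of_nonneg fun _ _ => hQ.nonneg _ _, Finset.prod_range]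
  congr 1
  · rw [show Fin.clamp 0 t = 0 from Fin.ext (by simp), layerUniform]
    split_ifs
    · rw [one_div, ENNReal.ofReal_inv_of_pos (mod_cast layerCard_pos k), ENNReal.ofReal_natCast]
    · exact ENNReal.ofReal_zero
  · refine Fintype.prod_congr _ _ fun i => ?_
    rw [hclamp i (by omega), hclamp (i + 1) (by omega)]
    rfl

variable [IsProbabilityMeasure P]

lemma IsWalkUniform.tsum_measure_cylinder_le (hwalk : IsWalkUniform P X Q k) (hQ : IsULW Q)
    (t : ℕ) : ∑' f, P (trajectory X t ⁻¹' {f}) ≤ P Set.univ := by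
  simp_rw [hwalk.measure_cylinder hQ,
    tsum_pathWeight (tsum_layerUniform k) hQ.tsum_kernelENNReal, measure_univ, le_refl]

lemma IsWalkUniform.measure_preimage_paths (hwalk : IsWalkUniform P X Q k) (hQ : IsULW Q)
    {t : ℕ} (J : Set (Fin (t + 1) → Z2)) :
    P (trajectory X t ⁻¹' J) =
      ∑' f, J.indicator (pathWeight (layerUniform k) (kernelENNReal Q)) f := by
  rw [measure_preimage_eq_tsum_of_tsum_le (hwalk.tsum_measure_cylinder_le hQ t),
    tsum_subtype J fun f => P (trajectory X t ⁻¹' {f})]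
  simp only [hwalk.measure_cylinder hQ]

theorem cond_eq_inv_layerCard (hQ : IsULW Q) (hwalk : IsWalkUniform P X Q k)
    {t m : ℕ} (D : ℕ → Set ℕ) (hD : D t = {m}) {z : Z2} (hz : dnorm z = m)
    (hA : P {ω | ∀ s ≤ t, dnorm (X s ω) ∈ D s} ≠ 0) :
    ProbabilityTheory.cond P {ω | ∀ s ≤ t, dnorm (X s ω) ∈ D s} {ω | X t ω = z} =
      1 / (layerCard m : ℝ≥0∞) := by
  set J : Set (Fin (t + 1) → Z2) := {f | ∀ i : Fin (t + 1), dnorm (f i) ∈ D i}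
  set G := pathMass (layerUniform k) (kernelENNReal Q) (fun s => dnorm ⁻¹' D s) t
  have hAJ : {ω | ∀ s ≤ t, dnorm (X s ω) ∈ D s} = trajectory X t ⁻¹' J := by
    ext ω
    simp [trajectory, J, Fin.forall_iff]
  have hBJ : {ω | X t ω = z} ∩ trajectory X t ⁻¹' J =
      trajectory X t ⁻¹' {f | f ∈ J ∧ f (Fin.last t) = z} := by
    ext ω
    simp [trajectory, J, and_comm]
  have hPB : P ({ω | X t ω = z} ∩ trajectory X t ⁻¹' J) = G z := by
    rw [hBJ, hwalk.measure_preimage_paths hQ]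
    rfl
  have hPA : P (trajectory X t ⁻¹' J) = layerCard m * G z := calc
    P (trajectory X t ⁻¹' J) = ∑' z', G z' := by
      rw [hwalk.measure_preimage_paths hQ, tsum_pathMass]; rfl
    _ = ∑ z' ∈ layerFinset m, G z' := tsum_eq_sum fun z' hz' =>
      pathMass_eq_zero_of_notMem (by simpa [hD, mem_layerFinset] using hz')
    _ = layerCard m * G z := by
      rw [Finset.sum_congr rfl fun z' hz' => pathMass_factorsThrough dnorm D
        (layerUniform_factorsThrough k) hQ.columnSum_factorsThrough t
        ((mem_layerFinset.mp hz').trans hz.symm), Finset.sum_const, card_layerFinset, nsmul_eq_mul]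
  rw [hAJ] at hA ⊢
  have hG0 : G z ≠ 0 := fun h => hA (by rw [hPA, h, mul_zero])
  have hGtop : G z ≠ ⊤ := hPB ▸ measure_ne_top P _
  rw [ProbabilityTheory.cond, Measure.smul_apply, smul_eq_mul,
    Measure.restrict_apply₀' (nullMeasurableSet_preimage_of_tsum_le
      (hwalk.tsum_measure_cylinder_le hQ t) J), hPB, hPA,
    ENNReal.mul_inv (Or.inl (mod_cast (layerCard_pos m).ne')) (Or.inl (ENNReal.natCast_ne_top _)),
    mul_assoc, ENNReal.inv_mul_cancel hG0 hGtop, mul_one, one_div]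

end Walk

theorem statement4_general
    {Ω : Type} [MeasurableSpace Ω] (P : Measure Ω) [IsProbabilityMeasure P]
    (Q : Z2 → Z2 → ℝ) (hQ : IsULW Q) (k : ℕ)
    (X : ℕ → Ω → Z2) (hwalk : IsWalkUniform P X Q k)
    (t : ℕ) (ℓ : ℕ → ℕ)
    (z : Z2) (hz : dnorm z = ℓ t)
    (h1 : P {ω | ∀ s ≤ t, dnorm (X s ω) = ℓ s} ≠ 0)
    (h2 : P {ω | dnorm (X t ω) = ℓ t} ≠ 0) :
    ProbabilityTheory.cond P {ω | ∀ s ≤ t, dnorm (X s ω) = ℓ s} {ω | X t ω = z}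
        = 1 / (layerCard (ℓ t) : ℝ≥0∞) ∧
    ProbabilityTheory.cond P {ω | dnorm (X t ω) = ℓ t} {ω | X t ω = z}
        = 1 / (layerCard (ℓ t) : ℝ≥0∞) := by
  have hlast : {ω | dnorm (X t ω) = ℓ t} =
      {ω | ∀ s ≤ t, dnorm (X s ω) ∈ if s = t then {ℓ t} else Set.univ} := by
    ext ω
    refine ⟨fun h s _ => ?_, fun h => by simpa using h t le_rfl⟩
    split_ifs with hs
    exacts [hs ▸ h, trivial]
  refine ⟨cond_eq_inv_layerCard hQ hwalk (fun s => {ℓ s}) rfl hz h1, ?_⟩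
  rw [hlast] at h2 ⊢
  exact cond_eq_inv_layerCard hQ hwalk _ (if_pos rfl) hz h2

/-- **Lemma (uniformity on layers).** Under `P_k` (the walk started uniformly on `L_k`),
conditionally on the layer process, `X(t)` is uniform on its layer:
`P_k(X(t)=z ∣ ‖X(s)‖=ℓ(s), 0≤s≤t) = 1/#L_{ℓ(t)} = P_k(X(t)=z ∣ ‖X(t)‖=ℓ(t))`. -/
theorem statement4
    {Ω : Type} [MeasurableSpace Ω] (P : Measure Ω) [IsProbabilityMeasure P]
    (Q : Z2 → Z2 → ℝ) (hQ : IsULW Q) (k : ℕ)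
    (X : ℕ → Ω → Z2) (hwalk : IsWalkUniform P X Q k)
    (t : ℕ) (ℓ : ℕ → ℕ) (hk : ℓ 0 = k)
    (hstep : ∀ s < t, ℓ (s + 1) ≤ ℓ s + 1)
    (z : Z2) (hz : dnorm z = ℓ t)
    (h1 : P {ω | ∀ s ≤ t, dnorm (X s ω) = ℓ s} ≠ 0)
    (h2 : P {ω | dnorm (X t ω) = ℓ t} ≠ 0) :
    ProbabilityTheory.cond P {ω | ∀ s ≤ t, dnorm (X s ω) = ℓ s} {ω | X t ω = z}
        = 1 / (layerCard (ℓ t) : ℝ≥0∞) ∧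
    ProbabilityTheory.cond P {ω | dnorm (X t ω) = ℓ t} {ω | X t ω = z}
        = 1 / (layerCard (ℓ t) : ℝ≥0∞) :=
  statement4_general P Q hQ k X hwalk t ℓ z hz h1 h2
end

section
/- (Abelian property of Diaconis–Fulton dynamics.) Suppose at each site x∈ℤ² there is an infinite stack of cards, each labeled by a site of ℤ². Start from any particle configuration on ℤ² (a function assigning a finite number of particles in total to the sites). A legal move consists of choosing a site x currently occupied by at least two particles, burning (removing) the top card of the stack at x, and moving one particle from x to the site labeled by the burned card. A finite sequence of legal moves is complete if it results in a configuration in which each site has at most one particle. Then: if there is a complete finite sequence of legal moves, every sequence of legal moves is finite, and any two complete sequences of legal moves result in the same final configuration. -/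
open MeasureTheory Filter
open scoped Classical ENNReal

/-- A state of the Diaconis–Fulton dynamics: a particle configuration `η : ℤ² → ℕ`
together with, at each site, the number of cards already burned.  A move at `x`
burns the top unburned card `σc x (c x)` at `x` and moves one particle from `x`
to the site that card names. -/
def applyMove (σc : Z2 → ℕ → Z2) (s : (Z2 → ℕ) × (Z2 → ℕ)) (x : Z2) :
    (Z2 → ℕ) × (Z2 → ℕ) :=
  ((fun w => (if w = x then s.1 w - 1 else s.1 w) + (if w = σc x (s.2 x) then 1 else 0)),
   fun w => if w = x then s.2 w + 1 else s.2 w)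

/-- A list of sites is a legal sequence of moves from the state `s` if each successive
move is made from a site occupied by at least two particles. -/
def LegalSeq (σc : Z2 → ℕ → Z2) : (Z2 → ℕ) × (Z2 → ℕ) → List Z2 → Prop
  | _, [] => True
  | s, x :: L => 2 ≤ s.1 x ∧ LegalSeq σc (applyMove σc s x) L

/-!
Moves at distinct sites commute, and a move that is legal at `x` stays legal until `x` is
toppled, since the counts at other sites only grow. So a legal move at `x` can be brought to
the front of any complete sequence, which must contain `x` (otherwise `x` keeps two
particles). By induction, every legal sequence is a sub-multiset of every complete one: this
bounds the length of legal sequences, and makes any two complete sequences permutations of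
each other, ending in the same state.
-/

section DiaconisFulton

variable (σc : Z2 → ℕ → Z2)

lemma applyMove_fst_le_of_ne (s : (Z2 → ℕ) × (Z2 → ℕ)) {x y : Z2} (hyx : y ≠ x) :
    s.1 y ≤ (applyMove σc s x).1 y := by
  simp only [applyMove, if_neg hyx]
  exact Nat.le_add_right _ _

lemma foldl_applyMove_fst_le_of_not_mem :
    ∀ (L : List Z2) (s : (Z2 → ℕ) × (Z2 → ℕ)) {x : Z2}, x ∉ L →
      s.1 x ≤ (L.foldl (applyMove σc) s).1 x
  | [], _, _, _ => le_rfl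
  | y :: L, s, x, hx => by
      rw [List.mem_cons, not_or] at hx
      exact (applyMove_fst_le_of_ne σc s hx.1).trans
        (foldl_applyMove_fst_le_of_not_mem L _ hx.2)

-- Each move burns a card from its own stack; positivity keeps the ℕ-subtraction exact.
lemma applyMove_comm (s : (Z2 → ℕ) × (Z2 → ℕ)) {x y : Z2} (hxy : x ≠ y)
    (hx : 0 < s.1 x) (hy : 0 < s.1 y) :
    applyMove σc (applyMove σc s x) y = applyMove σc (applyMove σc s y) x := by
  ext w <;> simp only [applyMove, if_neg hxy, if_neg hxy.symm] <;> split_ifs <;> grind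

lemma LegalSeq.cons_erase :
    ∀ {s : (Z2 → ℕ) × (Z2 → ℕ)} {L : List Z2} {x : Z2}, LegalSeq σc s L → x ∈ L →
      2 ≤ s.1 x → LegalSeq σc s (x :: L.erase x) ∧
        (L.erase x).foldl (applyMove σc) (applyMove σc s x) = L.foldl (applyMove σc) s
  | s, y :: L, x, ⟨hy, hL⟩, hmem, hx => by
      rcases eq_or_ne y x with rfl | hyx
      · rw [List.erase_cons_head]
        exact ⟨⟨hy, hL⟩, rfl⟩
      have hxL : x ∈ L := (List.mem_cons.mp hmem).resolve_left hyx.symm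
      obtain ⟨⟨-, hLx⟩, hfold⟩ :=
        LegalSeq.cons_erase hL hxL (hx.trans (applyMove_fst_le_of_ne σc s hyx.symm))
      have hcomm := applyMove_comm σc s hyx (by omega) (by omega)
      rw [List.erase_cons_tail (by simpa using hyx)]
      refine ⟨⟨hx, hy.trans (applyMove_fst_le_of_ne σc s hyx), ?_⟩, ?_⟩
      · rwa [← hcomm]
      · rwa [List.foldl_cons, List.foldl_cons, ← hcomm]

/-- Least action principle. -/
lemma LegalSeq.subperm_of_complete :
    ∀ {s : (Z2 → ℕ) × (Z2 → ℕ)} {L M : List Z2}, LegalSeq σc s L →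
      (∀ z, (L.foldl (applyMove σc) s).1 z ≤ 1) → LegalSeq σc s M → M.Subperm L
  | _, _, [], _, _, _ => List.nil_subperm
  | s, L, x :: M, hL, hcomp, ⟨hx, hM⟩ => by
      have hxL : x ∈ L := by
        by_contra hxL
        have := (foldl_applyMove_fst_le_of_not_mem σc L s hxL).trans (hcomp x)
        omega
      obtain ⟨⟨-, hLx⟩, hfold⟩ := LegalSeq.cons_erase σc hL hxL hx
      have hsub := LegalSeq.subperm_of_complete hLx (hfold ▸ hcomp) hM
      exact ((List.subperm_cons x).2 hsub).trans (List.perm_cons_erase hxL).symm.subperm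

lemma LegalSeq.foldl_eq_of_perm :
    ∀ {s : (Z2 → ℕ) × (Z2 → ℕ)} {L M : List Z2}, LegalSeq σc s L → LegalSeq σc s M →
      M.Perm L → M.foldl (applyMove σc) s = L.foldl (applyMove σc) s
  | _, L, [], _, _, hperm => by rw [hperm.nil_eq]
  | s, L, x :: M, hL, ⟨hx, hM⟩, hperm => by
      have hxL : x ∈ L := hperm.subset List.mem_cons_self
      obtain ⟨⟨-, hLx⟩, hfold⟩ := LegalSeq.cons_erase σc hL hxL hx
      rw [List.foldl_cons, ← hfold]
      exact LegalSeq.foldl_eq_of_perm hLx hM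
        (hperm.trans (List.perm_cons_erase hxL)).cons_inv

end DiaconisFulton

theorem statement8_general
    (σc : Z2 → ℕ → Z2) (η : Z2 → ℕ)
    (L : List Z2) (hL : LegalSeq σc (η, fun _ => 0) L)
    (hcomp : ∀ z, (L.foldl (applyMove σc) (η, fun _ => 0)).1 z ≤ 1) :
    (¬ ∃ f : ℕ → Z2, ∀ n : ℕ,
        LegalSeq σc (η, fun _ => 0) (List.ofFn fun i : Fin n => f i)) ∧
    (∀ L' : List Z2, LegalSeq σc (η, fun _ => 0) L' →
        (∀ z, (L'.foldl (applyMove σc) (η, fun _ => 0)).1 z ≤ 1) →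
        (L'.foldl (applyMove σc) (η, fun _ => 0)).1
          = (L.foldl (applyMove σc) (η, fun _ => 0)).1) := by
  refine ⟨fun ⟨f, hf⟩ => ?_, fun L' hL' hcomp' => ?_⟩
  · have hlen := (hL.subperm_of_complete σc hcomp (hf (L.length + 1))).length_le
    simp at hlen
  · have hperm := (hL.subperm_of_complete σc hcomp hL').antisymm
      (hL'.subperm_of_complete σc hcomp' hL)
    rw [hL.foldl_eq_of_perm σc hL' hperm]

/-- **Abelian property.** Start from a particle configuration `η` with finitely many
particles, with unburned stacks.  If there is a complete finite sequence of legal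
moves (one whose final configuration has at most one particle per site), then
every sequence of legal moves is finite (there is no infinite legal sequence), and
any complete sequence of legal moves results in the same final configuration. -/
theorem statement8
    (σc : Z2 → ℕ → Z2) (η : Z2 → ℕ) (hfin : (Function.support η).Finite)
    (L : List Z2) (hL : LegalSeq σc (η, fun _ => 0) L)
    (hcomp : ∀ z, (L.foldl (applyMove σc) (η, fun _ => 0)).1 z ≤ 1) :
    (¬ ∃ f : ℕ → Z2, ∀ n : ℕ,
        LegalSeq σc (η, fun _ => 0) (List.ofFn fun i : Fin n => f i)) ∧
    (∀ L' : List Z2, LegalSeq σc (η, fun _ => 0) L' →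
        (∀ z, (L'.foldl (applyMove σc) (η, fun _ => 0)).1 z ≤ 1) →
        (L'.foldl (applyMove σc) (η, fun _ => 0)).1
          = (L.foldl (applyMove σc) (η, fun _ => 0)).1) :=
  statement8_general σc η L hL hcomp
end

section
/- For every p∈[0,1), the kernel Q_p = p·Q_in + (1−p)·Q_out defines a uniformly layered walk; that is, Q_p satisfies conditions (U1), (U2) and (U3). -/
open MeasureTheory Filter
open scoped Classical ENNReal

/-!
Both kernels are nearest-neighbour kernels: `Q_out` moves from `L_k` to `L_{k+1}`, and `Q_in`
moves from `L_{k+1}` to `L_k`, the origin being absorbing. They satisfy the detailed-balance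
relation `|L_{k+1}| Q_out(x, y) = |L_k| Q_in(y, x)` for `x ∈ L_k` and `y ∈ L_{k+1}`. In other words,
`Q_out` is the time reversal of `Q_in` for the measure that puts mass one on each layer, spread
uniformly. So the sum of a column of one kernel over a layer is a row sum of the other, which is
`1`, multiplied by a ratio of layer sizes. This depends on `y` only through `‖y‖`, which gives
(U3) for both kernels and hence for `Q_p`. (U1) holds because no step raises the norm by more
than one. (U2) holds because `Q_out(x, ·)` is a probability distribution on the outward
neighbours of `x` and `p < 1`.
-/

namespace Int

-- `omega` treats `a.sign` as an atom; these facts are what it needs to know about it.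
lemma sign_cases (a : ℤ) :
    (0 < a ∧ a.sign = 1) ∨ (a = 0 ∧ a.sign = 0) ∨ (a < 0 ∧ a.sign = -1) := by
  rcases lt_trichotomy a 0 with h | rfl | h
  · exact .inr <| .inr ⟨h, sign_eq_neg_one_of_neg h⟩
  · exact .inr <| .inl ⟨rfl, rfl⟩
  · exact .inl ⟨h, sign_eq_one_of_pos h⟩

lemma sign_add_sign (a : ℤ) : (a + a.sign).sign = a.sign := by
  have := a.sign_cases
  have := (a + a.sign).sign_cases
  omega

lemma natAbs_add_sign {a : ℤ} (ha : a ≠ 0) : (a + a.sign).natAbs = a.natAbs + 1 := by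
  have := a.sign_cases
  omega

end Int

lemma dnorm_eq_zero {x : Z2} : dnorm x = 0 ↔ x = origin := by
  obtain ⟨a, b⟩ := x
  simp only [dnorm, origin, Prod.mk.injEq]
  omega

lemma layer_finite (k : ℕ) : (layer k).Finite := by
  refine ((Set.finite_Icc (-(k : ℤ)) k).prod (Set.finite_Icc (-(k : ℤ)) k)).subset ?_
  rintro ⟨a, b⟩ (h : a.natAbs + b.natAbs = k)
  simp only [Set.mem_prod, Set.mem_Icc]
  omega

instance (k : ℕ) : Finite (layer k) := (layer_finite k).to_subtype

lemma hasSum_of_sum_eq_of_notMem {f : Z2 → ℝ} (s : Finset Z2) {a : ℝ}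
    (hf : ∀ y ∉ s, f y = 0) (ha : ∑ y ∈ s, f y = a) : HasSum f a :=
  ha ▸ hasSum_sum_of_ne_finset_zero hf

def OutStep (x y : Z2) : Prop := dnorm (y - x) = 1 ∧ dnorm y = dnorm x + 1

lemma OutStep.cases {x y : Z2} (h : OutStep x y) :
    (x.1 ≠ 0 ∧ y = (x.1 + x.1.sign, x.2)) ∨ (x.2 ≠ 0 ∧ y = (x.1, x.2 + x.2.sign)) ∨
      (x.1 = 0 ∧ (y = (1, x.2) ∨ y = (-1, x.2))) ∨
      (x.2 = 0 ∧ (y = (x.1, 1) ∨ y = (x.1, -1))) := by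
  obtain ⟨a, b⟩ := x
  obtain ⟨c, d⟩ := y
  obtain ⟨h₁, h₂⟩ := h
  simp only [dnorm, Prod.mk_sub_mk, Prod.mk.injEq] at *
  have := a.sign_cases
  have := b.sign_cases
  obtain ⟨rfl, rfl | rfl⟩ | ⟨rfl, rfl | rfl⟩ :
      (c = a ∧ (d = b + 1 ∨ d = b - 1)) ∨ (d = b ∧ (c = a + 1 ∨ c = a - 1)) := by omega
  all_goals omega

lemma outStep_of_Qout_ne_zero {x y : Z2} (h : Qout x y ≠ 0) : OutStep x y := by
  obtain ⟨a, b⟩ := x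
  obtain ⟨c, d⟩ := y
  have := a.sign_cases
  have := b.sign_cases
  unfold Qout at h
  split_ifs at h <;>
    simp only [OutStep, origin, dnorm, Prod.mk_sub_mk, Prod.mk.injEq, ne_eq,
      not_true_eq_false] at * <;>
    omega

lemma outStep_of_Qin_ne_zero {x y : Z2} (hy : y ≠ origin) (h : Qin y x ≠ 0) : OutStep x y := by
  obtain ⟨a, b⟩ := x
  obtain ⟨c, d⟩ := y
  have := c.sign_cases
  have := d.sign_cases
  unfold Qin at h
  split_ifs at h <;>
    simp only [OutStep, origin, dnorm, Prod.mk_sub_mk, Prod.mk.injEq, ne_eq,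
      not_true_eq_false] at * <;>
    omega

lemma dnorm_le_of_Qin_ne_zero {x y : Z2} (h : Qin x y ≠ 0) : dnorm y ≤ dnorm x := by
  by_cases hx : x = origin
  · subst hx
    have : y = origin := by by_contra hy; simp [Qin, hy] at h
    simp [this]
  · have := (outStep_of_Qin_ne_zero hx h).2
    omega

lemma Qout_nonneg (x y : Z2) : 0 ≤ Qout x y := by
  unfold Qout
  split_ifs <;> positivity

lemma Qin_nonneg (x y : Z2) : 0 ≤ Qin x y := by
  unfold Qin
  split_ifs with _ _ hx <;> try positivity
  all_goals
    have ha : (1 : ℝ) ≤ x.1.natAbs := by exact_mod_cast Int.natAbs_pos.mpr hx.1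
    have hb : (1 : ℝ) ≤ x.2.natAbs := by exact_mod_cast Int.natAbs_pos.mpr hx.2
    apply div_nonneg <;> linarith

lemma hasSum_Qout (x : Z2) : HasSum (Qout x) 1 := by
  obtain ⟨a, b⟩ := x
  rcases eq_or_ne a 0 with rfl | ha <;> rcases eq_or_ne b 0 with rfl | hb
  · refine hasSum_of_sum_eq_of_notMem {(1, 0), (-1, 0), (0, 1), (0, -1)} (fun y hy => ?_) ?_
    · obtain ⟨c, d⟩ := y
      simp only [Finset.mem_insert, Finset.mem_singleton, Prod.mk.injEq, not_or] at hy
      simp only [Qout, origin, dnorm, if_true]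
      exact if_neg (by omega)
    · simp [Qout, origin, dnorm]
      norm_num
  · refine hasSum_of_sum_eq_of_notMem {(1, b), (-1, b), (0, b + b.sign)} (fun y hy => ?_) ?_
    · simp only [Finset.mem_insert, Finset.mem_singleton, not_or] at hy
      simp [Qout, origin, hb, hy]
    · simp [Qout, origin, hb, Finset.sum_insert]
      field_simp
      ring
  · refine hasSum_of_sum_eq_of_notMem {(a, 1), (a, -1), (a + a.sign, 0)} (fun y hy => ?_) ?_
    · simp only [Finset.mem_insert, Finset.mem_singleton, not_or] at hy
      simp [Qout, origin, ha, hy]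
    · simp [Qout, origin, ha, Finset.sum_insert]
      field_simp
      ring
  · refine hasSum_of_sum_eq_of_notMem {(a, b + b.sign), (a + a.sign, b)} (fun y hy => ?_) ?_
    · simp only [Finset.mem_insert, Finset.mem_singleton, not_or] at hy
      simp [Qout, origin, ha, hb, hy]
    · simp [Qout, origin, ha, hb, Finset.sum_insert]
      field_simp
      ring

lemma hasSum_Qin (x : Z2) : HasSum (Qin x) 1 := by
  obtain ⟨a, b⟩ := x
  rcases eq_or_ne a 0 with rfl | ha <;> rcases eq_or_ne b 0 with rfl | hb
  · convert hasSum_ite_eq origin (1 : ℝ) using 1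
    funext y
    simp [Qin, origin]
  · convert hasSum_ite_eq ((0 : ℤ), b - b.sign) (1 : ℝ) using 1
    funext y
    simp [Qin, origin, hb]
  · convert hasSum_ite_eq (a - a.sign, (0 : ℤ)) (1 : ℝ) using 1
    funext y
    simp [Qin, origin, ha]
  · refine hasSum_of_sum_eq_of_notMem {(a, b - b.sign), (a - a.sign, b)} (fun y hy => ?_) ?_
    · simp only [Finset.mem_insert, Finset.mem_singleton, not_or] at hy
      simp [Qin, origin, ha, hb, hy]
    · have h₁ : (1 : ℝ) ≤ a.natAbs := by exact_mod_cast Int.natAbs_pos.mpr ha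
      have h₂ : (1 : ℝ) ≤ b.natAbs := by exact_mod_cast Int.natAbs_pos.mpr hb
      have : (a.natAbs : ℝ) + b.natAbs - 1 ≠ 0 := by linarith
      simp [Qin, origin, ha, hb, Finset.sum_insert, -Nat.cast_natAbs]
      field_simp
      ring

lemma layerCard_mul_Qout_add_sign_fst {a : ℤ} (ha : a ≠ 0) (b : ℤ) :
    (layerCard (dnorm (a + a.sign, b)) : ℝ) * Qout (a, b) (a + a.sign, b) =
      layerCard (dnorm (a, b)) * Qin (a + a.sign, b) (a, b) := by
  have ha' : a + a.sign ≠ 0 := by have := a.sign_cases; omega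
  rcases eq_or_ne b 0 with rfl | hb
  · simp [Qout, Qin, origin, dnorm, layerCard, ha, ha', a.sign_add_sign, Int.natAbs_add_sign ha]
    field_simp
  · have : (0 : ℝ) < |(a : ℝ)| + |(b : ℝ)| :=
      add_pos_of_pos_of_nonneg (abs_pos.mpr (by exact_mod_cast ha)) (abs_nonneg _)
    simp [Qout, Qin, origin, dnorm, layerCard, ha, ha', hb, a.sign_add_sign,
      Int.natAbs_add_sign ha]
    rw [show |(a : ℝ)| + 1 + |(b : ℝ)| - 1 = |(a : ℝ)| + |(b : ℝ)| by ring]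
    field_simp
    ring

lemma layerCard_mul_Qout_add_sign_snd {b : ℤ} (hb : b ≠ 0) (a : ℤ) :
    (layerCard (dnorm (a, b + b.sign)) : ℝ) * Qout (a, b) (a, b + b.sign) =
      layerCard (dnorm (a, b)) * Qin (a, b + b.sign) (a, b) := by
  have hb' : b + b.sign ≠ 0 := by have := b.sign_cases; omega
  rcases eq_or_ne a 0 with rfl | ha
  · simp [Qout, Qin, origin, dnorm, layerCard, hb, hb', b.sign_add_sign, Int.natAbs_add_sign hb]
    field_simp
  · have : (0 : ℝ) < |(a : ℝ)| + |(b : ℝ)| :=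
      add_pos_of_nonneg_of_pos (abs_nonneg _) (abs_pos.mpr (by exact_mod_cast hb))
    simp [Qout, Qin, origin, dnorm, layerCard, ha, hb, hb', b.sign_add_sign,
      Int.natAbs_add_sign hb]
    rw [show |(a : ℝ)| + (|(b : ℝ)| + 1) - 1 = |(a : ℝ)| + |(b : ℝ)| by ring]
    field_simp
    ring

lemma layerCard_mul_Qout_unit_fst {e : ℤ} (he : e = 1 ∨ e = -1) (b : ℤ) :
    (layerCard (dnorm (e, b)) : ℝ) * Qout (0, b) (e, b) =
      layerCard (dnorm (0, b)) * Qin (e, b) (0, b) := by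
  rcases eq_or_ne b 0 with rfl | hb <;> rcases he with rfl | rfl
  all_goals simp [Qout, Qin, origin, dnorm, layerCard, *]
  all_goals field_simp
  all_goals ring

lemma layerCard_mul_Qout_unit_snd {e : ℤ} (he : e = 1 ∨ e = -1) (a : ℤ) :
    (layerCard (dnorm (a, e)) : ℝ) * Qout (a, 0) (a, e) =
      layerCard (dnorm (a, 0)) * Qin (a, e) (a, 0) := by
  rcases eq_or_ne a 0 with rfl | ha <;> rcases he with rfl | rfl
  all_goals simp [Qout, Qin, origin, dnorm, layerCard, *]
  all_goals field_simp
  all_goals ring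

theorem layerCard_mul_Qout_eq {x y : Z2} (hy : y ≠ origin) :
    (layerCard (dnorm y) : ℝ) * Qout x y = layerCard (dnorm x) * Qin y x := by
  by_cases h : OutStep x y
  · obtain ⟨a, b⟩ := x
    rcases h.cases with ⟨ha, rfl⟩ | ⟨hb, rfl⟩ | ⟨rfl, rfl | rfl⟩ | ⟨rfl, rfl | rfl⟩
    · exact layerCard_mul_Qout_add_sign_fst ha b
    · exact layerCard_mul_Qout_add_sign_snd hb a
    · exact layerCard_mul_Qout_unit_fst (.inl rfl) b
    · exact layerCard_mul_Qout_unit_fst (.inr rfl) b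
    · exact layerCard_mul_Qout_unit_snd (.inl rfl) a
    · exact layerCard_mul_Qout_unit_snd (.inr rfl) a
  · have hout : Qout x y = 0 := by_contra fun h' => h (outStep_of_Qout_ne_zero h')
    have hin : Qin y x = 0 := by_contra fun h' => h (outStep_of_Qin_ne_zero hy h')
    rw [hout, hin, mul_zero, mul_zero]

lemma Qout_eq_div_mul_Qin {x y : Z2} (hy : y ≠ origin) :
    Qout x y = layerCard (dnorm x) / layerCard (dnorm y) * Qin y x := by
  rw [div_mul_eq_mul_div, eq_div_iff (by exact_mod_cast (layerCard_pos _).ne'), mul_comm,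
    layerCard_mul_Qout_eq hy]

lemma Qin_eq_div_mul_Qout {x y : Z2} (hx : x ≠ origin) :
    Qin x y = layerCard (dnorm x) / layerCard (dnorm y) * Qout y x := by
  rw [div_mul_eq_mul_div, eq_div_iff (by exact_mod_cast (layerCard_pos _).ne'), mul_comm,
    layerCard_mul_Qout_eq hx]

lemma tsum_layer_Qout (k : ℕ) (y : Z2) :
    ∑' x : layer k, Qout x y =
      if dnorm y = k + 1 then (layerCard k : ℝ) / layerCard (k + 1) else 0 := by
  split_ifs with hy
  · have hy0 : y ≠ origin := by rintro rfl; simp [dnorm, origin] at hy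
    have hsupp : Function.support (Qin y) ⊆ layer k := fun x hx =>
      show dnorm x = k by have := (outStep_of_Qin_ne_zero hy0 hx).2; omega
    calc ∑' x : layer k, Qout x y
        = ∑' x : layer k, (layerCard k : ℝ) / layerCard (k + 1) * Qin y x :=
          tsum_congr fun x => by rw [Qout_eq_div_mul_Qin hy0, x.2, hy]
      _ = (layerCard k : ℝ) / layerCard (k + 1) := by
          rw [tsum_mul_left, tsum_subtype_eq_of_support_subset hsupp, (hasSum_Qin y).tsum_eq,
            mul_one]
  · refine (tsum_congr fun x => ?_).trans tsum_zero
    by_contra h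
    exact hy ((x.2 : dnorm x = k) ▸ (outStep_of_Qout_ne_zero h).2)

lemma tsum_layer_Qin (k : ℕ) (y : Z2) :
    ∑' x : layer k, Qin x y =
      if k = 0 ∧ dnorm y = 0 then 1
      else if k = dnorm y + 1 then (layerCard k : ℝ) / layerCard (dnorm y) else 0 := by
  split_ifs with h0 h1
  · obtain ⟨rfl, hy⟩ := h0
    obtain rfl := dnorm_eq_zero.mp hy
    rw [tsum_subtype (layer 0) (Qin · origin), tsum_eq_single origin]
    · simp [Qin, layer, dnorm, origin]
    · exact fun x hx =>
        Set.indicator_of_notMem (fun h : x ∈ layer 0 => hx (dnorm_eq_zero.mp h)) _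
  · have hsupp : Function.support (Qout y) ⊆ layer k := fun x hx =>
      show dnorm x = k by have := (outStep_of_Qout_ne_zero hx).2; omega
    have hx0 (x : layer k) : (x : Z2) ≠ origin := fun h => by
      have hk : dnorm (x : Z2) = k := x.2
      simp only [h, dnorm, origin, Int.natAbs_zero, add_zero] at hk
      omega
    calc ∑' x : layer k, Qin x y
        = ∑' x : layer k, (layerCard k : ℝ) / layerCard (dnorm y) * Qout y x :=
          tsum_congr fun x => by rw [Qin_eq_div_mul_Qout (hx0 x), x.2]
      _ = (layerCard k : ℝ) / layerCard (dnorm y) := by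
          rw [tsum_mul_left, tsum_subtype_eq_of_support_subset hsupp, (hasSum_Qout y).tsum_eq,
            mul_one]
  · refine (tsum_congr fun x => ?_).trans tsum_zero
    by_contra h
    by_cases hx : (x : Z2) = origin
    · rw [hx] at h
      have hy : y = origin := by by_contra hy; simp [Qin, hy] at h
      exact h0 ⟨by simpa [hx, dnorm, origin] using x.2.symm, by simp [hy, dnorm, origin]⟩
    · exact h1 ((x.2 : dnorm x = k) ▸ (outStep_of_Qin_ne_zero hx h).2)

lemma tsum_layer_Qp (p : ℝ) (k : ℕ) (y : Z2) :
    ∑' x : layer k, Qp p x y =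
      p * ∑' x : layer k, Qin x y + (1 - p) * ∑' x : layer k, Qout x y := by
  simp only [Qp]
  rw [Summable.tsum_add .of_finite .of_finite, tsum_mul_left, tsum_mul_left]

lemma exists_outStep_Qout_pos (x : Z2) : ∃ y, OutStep x y ∧ 0 < Qout x y := by
  obtain ⟨y, hy⟩ : ∃ y, Qout x y ≠ 0 := by
    by_contra! h
    simpa [h] using (hasSum_Qout x).tsum_eq
  exact ⟨y, outStep_of_Qout_ne_zero hy, (Qout_nonneg x y).lt_of_ne' hy⟩

/-- **Lemma.** For every `p ∈ [0,1)`, the kernel `Q_p = p·Q_in + (1−p)·Q_out` is a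
uniformly layered walk kernel: it is a Markov kernel satisfying (U1), (U2), (U3). -/
theorem statement16 (p : ℝ) (hp : p ∈ Set.Ico (0 : ℝ) 1) : IsULW (Qp p) := by
  obtain ⟨hp₀, hp₁⟩ := hp
  refine ⟨fun x y => ?_, fun x => ?_, fun x y h => ?_, fun x => ?_, fun k y z h => ?_⟩
  · exact add_nonneg (mul_nonneg hp₀ (Qin_nonneg x y))
      (mul_nonneg (sub_nonneg.2 hp₁.le) (Qout_nonneg x y))
  · exact (((hasSum_Qin x).mul_left p).add ((hasSum_Qout x).mul_left (1 - p))).tsum_eq.trans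
      (by ring)
  · have hin : Qin x y = 0 := by_contra fun h' => by
      have := dnorm_le_of_Qin_ne_zero h'
      omega
    have hout : Qout x y = 0 := by_contra fun h' => by
      have := (outStep_of_Qout_ne_zero h').2
      omega
    rw [Qp, hin, hout, mul_zero, mul_zero, add_zero]
  · obtain ⟨y, hxy, hpos⟩ := exists_outStep_Qout_pos x
    exact ⟨y, hxy.2, add_pos_of_nonneg_of_pos (mul_nonneg hp₀ (Qin_nonneg x y))
      (mul_pos (sub_pos.2 hp₁) hpos)⟩
  · simp only [tsum_layer_Qp, tsum_layer_Qin, tsum_layer_Qout, h]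
end

section
/- For any uniformly layered walk and any n, the stopped cluster is contained in the internal DLA cluster in distribution via a coupling: there exists a coupling of the processes (using the same walks and the abelian property) under which S(i) ⊆ A(i) for all 1 ≤ i ≤ v_n; in particular P( D_ρ ⊄ A(v_n) ) ≤ P( D_ρ ⊄ S(v_n) ) for every ρ ≥ 0. -/
open MeasureTheory Filter
open scoped Classical ENNReal

/-!
Drive both processes by the same walks and show `S(i) ⊆ A(i)` pointwise by induction. Given
`S(i) ⊆ A(i)`, the next stopped particle stops no later than its walk first leaves `A(i)` (leaving
`A(i)` means leaving `S(i)`), so it stops either inside `A(i)` or exactly where the internal DLA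
particle settles. The coupling is then the identity, and the probability bound is monotonicity.
-/

theorem exit_mem_insert_of_subset {α : Type*} [DecidableEq α] (γ : ℕ → α) (B : Set α)
    {S A : Finset α} (hSA : S ⊆ A) :
    γ (sInf {t | γ t ∈ B ∨ γ t ∉ S}) ∈ insert (γ (sInf {t | γ t ∉ A})) A := by
  set τS := sInf {t | γ t ∈ B ∨ γ t ∉ S}
  by_cases hA : γ τS ∈ A
  · exact Finset.mem_insert_of_mem hA
  · have hexitA : γ (sInf {t | γ t ∉ A}) ∉ A := Nat.sInf_mem (s := {t | γ t ∉ A}) ⟨τS, hA⟩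
    have hS_le_A : τS ≤ sInf {t | γ t ∉ A} := Nat.sInf_le (Or.inr fun h => hexitA (hSA h))
    have hA_le_S : sInf {t | γ t ∉ A} ≤ τS := Nat.sInf_le hA
    rw [le_antisymm hS_le_A hA_le_S]
    exact Finset.mem_insert_self _ _

theorem stoppedC_subset_gCluster {Ω : Type} (Y : ℕ → ℕ → Ω → Z2) (n : ℕ)
    (h0 : ∀ ω, Y 0 0 ω = origin) (i : ℕ) (ω : Ω) :
    stoppedC Y n i ω ⊆ gCluster Y i ω := by
  induction i with
  | zero => simp [stoppedC, gCluster, h0]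
  | succ k ih =>
    exact Finset.insert_subset (exit_mem_insert_of_subset (Y (k + 1) · ω) (layer n) ih)
      (ih.trans (Finset.subset_insert _ _))

theorem statement19_general
    {Ω : Type} [MeasurableSpace Ω] (P : Measure Ω) (n : ℕ)
    (Y : ℕ → ℕ → Ω → Z2)
    (hstart : ∀ i ω, Y i 0 ω = origin) :
    (∃ A' : ℕ → Ω → Finset Z2,
      (∀ (k : ℕ) (F : ℕ → Finset Z2),
          P {ω | ∀ j ≤ k, A' j ω = F j} = P {ω | ∀ j ≤ k, gCluster Y j ω = F j}) ∧
      ∀ ω, ∀ i ≤ 2 * n * (n + 1), stoppedC Y n i ω ⊆ A' i ω) ∧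
    ∀ ρ : ℝ, 0 ≤ ρ →
      P {ω | ¬ diamond ρ ⊆ (↑(gCluster Y (2 * n * (n + 1)) ω) : Set Z2)}
        ≤ P {ω | ¬ diamond ρ ⊆ (↑(stoppedC Y n (2 * n * (n + 1)) ω) : Set Z2)} := by
  have hSA := stoppedC_subset_gCluster Y n (hstart 0)
  refine ⟨⟨gCluster Y, fun _ _ => rfl, fun ω i _ => hSA i ω⟩, fun ρ _ => measure_mono ?_⟩
  intro ω hA hS
  exact hA (hS.trans (Finset.coe_subset.mpr (hSA _ ω)))

/-- **Lemma (the stopped cluster is dominated by the cluster).** For any uniformly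
layered walk and any `n`, there is a coupling: a copy `A'` of the internal DLA
cluster process (equal to it in distribution as a process) with `S(i) ⊆ A'(i)`
pointwise for all `1 ≤ i ≤ v_n`; in particular
`P(D_ρ ⊄ A(v_n)) ≤ P(D_ρ ⊄ S(v_n))` for every `ρ ≥ 0`.
(Recall `gCluster Y k = A(k+1)`, `stoppedC Y n k = S(k+1)`, `v_n = 2n(n+1)+1`.) -/
theorem statement19
    {Ω : Type} [MeasurableSpace Ω] (P : Measure Ω) [IsProbabilityMeasure P]
    (Q : Z2 → Z2 → ℝ) (hQ : IsULW Q) (n : ℕ)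
    (Y : ℕ → ℕ → Ω → Z2)
    (hstart : ∀ i ω, Y i 0 ω = origin)
    (hwalk : ∀ i, IsWalkFrom P (Y i) Q origin)
    (hindep : IndepWalks P Y) :
    (∃ A' : ℕ → Ω → Finset Z2,
      (∀ (k : ℕ) (F : ℕ → Finset Z2),
          P {ω | ∀ j ≤ k, A' j ω = F j} = P {ω | ∀ j ≤ k, gCluster Y j ω = F j}) ∧
      ∀ ω, ∀ i ≤ 2 * n * (n + 1), stoppedC Y n i ω ⊆ A' i ω) ∧
    ∀ ρ : ℝ, 0 ≤ ρ →
      P {ω | ¬ diamond ρ ⊆ (↑(gCluster Y (2 * n * (n + 1)) ω) : Set Z2)}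
        ≤ P {ω | ¬ diamond ρ ⊆ (↑(stoppedC Y n (2 * n * (n + 1)) ω) : Set Z2)} :=
  statement19_general P n Y hstart
end
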